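/- Let K be a field of characteristic not 2 or 3 and R = K[t,z,w,y]/(y^2, zy, z^2, t^2 - ty - 2wy, w^2 - 3ty - 4wy, tz - ty, wz - 2wy). Then every ℓ ∈ R_1 with ℓ^2 = 0 is of the form ay + bz for some a, b ∈ K, and the element y - z satisfies (y-z)·R_1 is 1-dimensional (rank 1). -/
import Mathlib
set_option maxHeartbeats 1000000

open MvPolynomial

noncomputable def piece {K : Type*} [Field K] {n : ℕ} (I : Ideal (MvPolynomial (Fin n) K))
    (i : ℕ) : Submodule K (MvPolynomial (Fin n) K ⧸ I) :=
  (MvPolynomial.homogeneousSubmodule (Fin n) K i).map (Ideal.Quotient.mkₐ K I).toLinearMap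

/-- Variables: `X 0 = t`, `X 1 = z`, `X 2 = w`, `X 3 = y`;
the ideal `(y², zy, z², t² - ty - 2wy, w² - 3ty - 4wy, tz - ty, wz - 2wy)` of Example 2.7. -/
noncomputable def I16 (K : Type*) [Field K] : Ideal (MvPolynomial (Fin 4) K) :=
  Ideal.span ({X 3 ^ 2, X 1 * X 3, X 1 ^ 2, X 0 ^ 2 - X 0 * X 3 - C 2 * (X 2 * X 3),
    X 2 ^ 2 - C 3 * (X 0 * X 3) - C 4 * (X 2 * X 3), X 0 * X 1 - X 0 * X 3,
    X 2 * X 1 - C 2 * (X 2 * X 3)} : Set (MvPolynomial (Fin 4) K))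

noncomputable section Aux

namespace Stmt16Aux

variable (K : Type*) [Field K]

def A1 : MvPolynomial (Fin 4) K := X 3 ^ 2
def A2 : MvPolynomial (Fin 4) K := X 1 * X 3
def A3 : MvPolynomial (Fin 4) K := X 1 ^ 2
def A4 : MvPolynomial (Fin 4) K := X 0 ^ 2 - X 0 * X 3 - C 2 * (X 2 * X 3)
def A5 : MvPolynomial (Fin 4) K := X 2 ^ 2 - C 3 * (X 0 * X 3) - C 4 * (X 2 * X 3)
def A6 : MvPolynomial (Fin 4) K := X 0 * X 1 - X 0 * X 3
def A7 : MvPolynomial (Fin 4) K := X 2 * X 1 - C 2 * (X 2 * X 3)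

def genSet : Set (MvPolynomial (Fin 4) K) := {A1 K, A2 K, A3 K, A4 K, A5 K, A6 K, A7 K}

lemma I16_eq : I16 K = Ideal.span (genSet K) := rfl

def subst (v : Fin 4 → K) : MvPolynomial (Fin 4) K →ₐ[K] Polynomial K :=
  aeval (fun i => Polynomial.C (v i) * Polynomial.X)

def mu (v : Fin 4 → K) : MvPolynomial (Fin 4) K →ₗ[K] K :=
  (Polynomial.lcoeff K 2).comp (subst K v).toLinearMap

variable {K}

lemma subst_coeff_zero (v : Fin 4 → K) (r : MvPolynomial (Fin 4) K) :
    (subst K v r).coeff 0 = aeval (fun _ => (0:K)) r := by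
  rw [Polynomial.coeff_zero_eq_eval_zero]
  have h : (Polynomial.aeval (0:K)).comp (subst K v)
      = aeval (fun i => Polynomial.aeval (0:K) (Polynomial.C (v i) * Polynomial.X)) :=
    comp_aeval _ _
  have h2 := congrArg (fun f => f r) h
  simp only [AlgHom.coe_comp, Function.comp_apply] at h2
  simpa using h2

lemma mu_mul (v : Fin 4 → K) (r g : MvPolynomial (Fin 4) K) (c : K)
    (hg : subst K v g = Polynomial.C c * Polynomial.X ^ 2) :
    mu K v (r * g) = (aeval (fun _ => (0:K)) r) * c := by
  have : mu K v (r * g) = ((subst K v r * Polynomial.C c) * Polynomial.X ^ 2).coeff (0 + 2) := by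
    simp [mu, map_mul, hg]; ring_nf
  rw [this, Polynomial.coeff_mul_X_pow, Polynomial.coeff_mul_C, subst_coeff_zero]

lemma substA1 (v : Fin 4 → K) : subst K v (A1 K) = Polynomial.C (v 3 * v 3) * Polynomial.X ^ 2 := by
  simp [subst, A1, map_mul]; ring
lemma substA2 (v : Fin 4 → K) : subst K v (A2 K) = Polynomial.C (v 1 * v 3) * Polynomial.X ^ 2 := by
  simp [subst, A2, map_mul]; ring
lemma substA3 (v : Fin 4 → K) : subst K v (A3 K) = Polynomial.C (v 1 * v 1) * Polynomial.X ^ 2 := by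
  simp [subst, A3, map_mul]; ring
lemma substA4 (v : Fin 4 → K) : subst K v (A4 K)
    = Polynomial.C (v 0 * v 0 - v 0 * v 3 - 2 * (v 2 * v 3)) * Polynomial.X ^ 2 := by
  simp [subst, A4, map_mul, map_sub, map_ofNat]; ring
lemma substA5 (v : Fin 4 → K) : subst K v (A5 K)
    = Polynomial.C (v 2 * v 2 - 3 * (v 0 * v 3) - 4 * (v 2 * v 3)) * Polynomial.X ^ 2 := by
  simp [subst, A5, map_mul, map_sub, map_ofNat]; ring
lemma substA6 (v : Fin 4 → K) : subst K v (A6 K)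
    = Polynomial.C (v 0 * v 1 - v 0 * v 3) * Polynomial.X ^ 2 := by
  simp [subst, A6, map_mul, map_sub]; ring
lemma substA7 (v : Fin 4 → K) : subst K v (A7 K)
    = Polynomial.C (v 2 * v 1 - 2 * (v 2 * v 3)) * Polynomial.X ^ 2 := by
  simp [subst, A7, map_mul, map_sub, map_ofNat]; ring

lemma substXX (v : Fin 4 → K) (c : K) (i j : Fin 4) :
    subst K v (C c * (X i * X j)) = Polynomial.C (c * (v i * v j)) * Polynomial.X ^ 2 := by
  simp [subst, map_mul]; ring

lemma mu_CXX (v : Fin 4 → K) (c : K) (i j : Fin 4) :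
    mu K v (C c * (X i * X j)) = c * (v i * v j) := by
  have := mu_mul v 1 (C c * (X i * X j)) _ (substXX v c i j)
  simpa using this

variable (K)

/-- The three linear functionals (vanishing on `I16`) that read off, on the degree-two part,
the coefficients of `tw`, `ty`, `wy` respectively. -/
def L1 : MvPolynomial (Fin 4) K →ₗ[K] K := mu K ![1,0,1,0] - mu K ![1,0,0,0] - mu K ![0,0,1,0]
def L2 : MvPolynomial (Fin 4) K →ₗ[K] K := mu K ![1,1,0,1] - mu K ![0,1,0,1] + (3:K) • mu K ![0,0,1,0]
def L3 : MvPolynomial (Fin 4) K →ₗ[K] K :=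
  (2:K) • mu K ![1,0,0,0] + (2:K) • mu K ![0,1,1,0] + mu K ![0,0,1,1] + mu K ![0,0,1,0]
    - (2:K) • mu K ![0,1,0,0] - mu K ![0,0,0,1]

variable {K}

lemma vanish_of (L : MvPolynomial (Fin 4) K →ₗ[K] K)
    (h : ∀ g ∈ genSet K, ∀ r : MvPolynomial (Fin 4) K, L (r * g) = 0)
    {p : MvPolynomial (Fin 4) K} (hp : p ∈ I16 K) : L p = 0 := by
  rw [I16_eq, Ideal.span] at hp
  obtain ⟨c, hc, rfl⟩ := Submodule.mem_span_set.mp hp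
  rw [Finsupp.sum, map_sum]
  apply Finset.sum_eq_zero
  intro g hg
  rw [smul_eq_mul]
  exact h g (hc hg) (c g)

lemma L1_gen : ∀ g ∈ genSet K, ∀ r : MvPolynomial (Fin 4) K, L1 K (r * g) = 0 := by
  intro g hg r
  simp only [genSet, Set.mem_insert_iff, Set.mem_singleton_iff] at hg
  rcases hg with rfl|rfl|rfl|rfl|rfl|rfl|rfl <;>
    simp only [L1, LinearMap.sub_apply, LinearMap.add_apply, LinearMap.smul_apply,
      mu_mul _ r _ _ (substA1 _), mu_mul _ r _ _ (substA2 _), mu_mul _ r _ _ (substA3 _),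
      mu_mul _ r _ _ (substA4 _), mu_mul _ r _ _ (substA5 _), mu_mul _ r _ _ (substA6 _),
      mu_mul _ r _ _ (substA7 _), Matrix.cons_val_zero, Matrix.cons_val_one, Matrix.head_cons,
      Matrix.cons_val_two, Matrix.tail_cons, Matrix.cons_val_three, smul_eq_mul] <;> ring

lemma L2_gen : ∀ g ∈ genSet K, ∀ r : MvPolynomial (Fin 4) K, L2 K (r * g) = 0 := by
  intro g hg r
  simp only [genSet, Set.mem_insert_iff, Set.mem_singleton_iff] at hg
  rcases hg with rfl|rfl|rfl|rfl|rfl|rfl|rfl <;>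
    simp only [L2, LinearMap.sub_apply, LinearMap.add_apply, LinearMap.smul_apply,
      mu_mul _ r _ _ (substA1 _), mu_mul _ r _ _ (substA2 _), mu_mul _ r _ _ (substA3 _),
      mu_mul _ r _ _ (substA4 _), mu_mul _ r _ _ (substA5 _), mu_mul _ r _ _ (substA6 _),
      mu_mul _ r _ _ (substA7 _), Matrix.cons_val_zero, Matrix.cons_val_one, Matrix.head_cons,
      Matrix.cons_val_two, Matrix.tail_cons, Matrix.cons_val_three, smul_eq_mul] <;> ring

lemma L3_gen : ∀ g ∈ genSet K, ∀ r : MvPolynomial (Fin 4) K, L3 K (r * g) = 0 := by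
  intro g hg r
  simp only [genSet, Set.mem_insert_iff, Set.mem_singleton_iff] at hg
  rcases hg with rfl|rfl|rfl|rfl|rfl|rfl|rfl <;>
    simp only [L3, LinearMap.sub_apply, LinearMap.add_apply, LinearMap.smul_apply,
      mu_mul _ r _ _ (substA1 _), mu_mul _ r _ _ (substA2 _), mu_mul _ r _ _ (substA3 _),
      mu_mul _ r _ _ (substA4 _), mu_mul _ r _ _ (substA5 _), mu_mul _ r _ _ (substA6 _),
      mu_mul _ r _ _ (substA7 _), Matrix.cons_val_zero, Matrix.cons_val_one, Matrix.head_cons,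
      Matrix.cons_val_two, Matrix.tail_cons, Matrix.cons_val_three, smul_eq_mul] <;> ring

lemma memI_A (j : MvPolynomial (Fin 4) K) (hj : j ∈ genSet K) : j ∈ I16 K := by
  rw [I16_eq]; exact Ideal.subset_span hj

lemma mA1 : A1 K ∈ I16 K := memI_A _ (by left; rfl)
lemma mA2 : A2 K ∈ I16 K := memI_A _ (by right; left; rfl)
lemma mA3 : A3 K ∈ I16 K := memI_A _ (by right; right; left; rfl)
lemma mA6 : A6 K ∈ I16 K := memI_A _ (by right; right; right; right; right; left; rfl)
lemma mA7 : A7 K ∈ I16 K := memI_A _ (by right; right; right; right; right; right; rfl)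

lemma degree_one_cases (m : Fin 4 →₀ ℕ) (hm : m.degree = 1) :
    m = Finsupp.single 0 1 ∨ m = Finsupp.single 1 1 ∨ m = Finsupp.single 2 1 ∨
      m = Finsupp.single 3 1 := by
  have hsum : m 0 + m 1 + m 2 + m 3 = 1 := by
    have h1 : m.degree = ∑ i : Fin 4, m i := by
      rw [Finsupp.degree]
      exact Finset.sum_subset (Finset.subset_univ _)
        (fun x _ hx => Finsupp.notMem_support_iff.mp hx)
    rw [h1, Fin.sum_univ_four] at hm
    exact hm
  have h0 : (m 0 = 1 ∧ m 1 = 0 ∧ m 2 = 0 ∧ m 3 = 0) ∨ (m 0 = 0 ∧ m 1 = 1 ∧ m 2 = 0 ∧ m 3 = 0)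
      ∨ (m 0 = 0 ∧ m 1 = 0 ∧ m 2 = 1 ∧ m 3 = 0) ∨ (m 0 = 0 ∧ m 1 = 0 ∧ m 2 = 0 ∧ m 3 = 1) := by
    omega
  rcases h0 with ⟨h0,h1,h2,h3⟩|⟨h0,h1,h2,h3⟩|⟨h0,h1,h2,h3⟩|⟨h0,h1,h2,h3⟩
  · left; ext j; fin_cases j <;> simp_all [Finsupp.single_apply]
  · right; left; ext j; fin_cases j <;> simp_all [Finsupp.single_apply]
  · right; right; left; ext j; fin_cases j <;> simp_all [Finsupp.single_apply]
  · right; right; right; ext j; fin_cases j <;> simp_all [Finsupp.single_apply]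

end Stmt16Aux

end Aux

open Stmt16Aux in
theorem stmt16 {K : Type*} [Field K] (h2 : (2 : K) ≠ 0) (h3 : (3 : K) ≠ 0) :
    (∀ a b c d : K,
      (Ideal.Quotient.mk (I16 K) (C a * X 0 + C b * X 1 + C c * X 2 + C d * X 3)) ^ 2 = 0 →
        a = 0 ∧ c = 0) ∧
    Module.finrank K
      ((piece (I16 K) 1).map
        (LinearMap.mulLeft K (Ideal.Quotient.mk (I16 K) (X 3 - X 1)))) = 1 := by
  constructor
  · intro a b c d h
    set p : MvPolynomial (Fin 4) K := C a * X 0 + C b * X 1 + C c * X 2 + C d * X 3 with hp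
    have hpI : p ^ 2 ∈ I16 K := by
      rw [← Ideal.Quotient.eq_zero_iff_mem, map_pow]
      exact h
    set q : MvPolynomial (Fin 4) K :=
      C (2*(a*c)) * (X 0 * X 2)
        + (C (a*a) * (X 0 * X 3) + C (2*(a*b)) * (X 0 * X 3) + C (2*(a*d)) * (X 0 * X 3)
            + C (3*(c*c)) * (X 0 * X 3))
        + (C (2*(a*a)) * (X 2 * X 3) + C (4*(c*c)) * (X 2 * X 3) + C (4*(b*c)) * (X 2 * X 3)
            + C (2*(c*d)) * (X 2 * X 3)) with hq
    have hdiff : p ^ 2 - q = C (d*d) * A1 K + C (2*(b*d)) * A2 K + C (b*b) * A3 K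
        + C (a*a) * A4 K + C (c*c) * A5 K + C (2*(a*b)) * A6 K + C (2*(b*c)) * A7 K := by
      simp only [hp, hq, A1, A2, A3, A4, A5, A6, A7, map_mul, map_add, map_ofNat]
      ring
    have hqI : q ∈ I16 K := by
      have hd : p ^ 2 - q ∈ I16 K := by
        rw [hdiff]
        refine Ideal.add_mem _ (Ideal.add_mem _ (Ideal.add_mem _ (Ideal.add_mem _
          (Ideal.add_mem _ (Ideal.add_mem _ ?_ ?_) ?_) ?_) ?_) ?_) ?_ <;>
          refine Ideal.mul_mem_left _ _ (memI_A _ ?_) <;>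
          simp [genSet, Set.mem_insert_iff]
      have : q = p ^ 2 - (p ^ 2 - q) := by ring
      rw [this]
      exact Ideal.sub_mem _ hpI hd
    have e1 : (2:K)*(a*c) = 0 := by
      have := vanish_of (L1 K) (L1_gen) hqI
      rw [hq] at this
      simp only [L1, LinearMap.sub_apply, map_add, mu_CXX, Matrix.cons_val_zero,
        Matrix.cons_val_one, Matrix.head_cons, Matrix.cons_val_two, Matrix.tail_cons,
        Matrix.cons_val_three] at this
      linear_combination this
    have e2 : a*a + 2*(a*b) + 2*(a*d) + 3*(c*c) = 0 := by
      have := vanish_of (L2 K) (L2_gen) hqI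
      rw [hq] at this
      simp only [L2, LinearMap.sub_apply, LinearMap.add_apply, LinearMap.smul_apply, map_add,
        mu_CXX, Matrix.cons_val_zero, Matrix.cons_val_one, Matrix.head_cons, Matrix.cons_val_two,
        Matrix.tail_cons, Matrix.cons_val_three, smul_eq_mul] at this
      linear_combination this
    have e3 : 2*(a*a) + 4*(c*c) + 4*(b*c) + 2*(c*d) = 0 := by
      have := vanish_of (L3 K) (L3_gen) hqI
      rw [hq] at this
      simp only [L3, LinearMap.sub_apply, LinearMap.add_apply, LinearMap.smul_apply, map_add,
        mu_CXX, Matrix.cons_val_zero, Matrix.cons_val_one, Matrix.head_cons, Matrix.cons_val_two,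
        Matrix.tail_cons, Matrix.cons_val_three, smul_eq_mul] at this
      linear_combination this
    have hac : a * c = 0 := by
      rcases mul_eq_zero.mp e1 with h | h
      · exact absurd h h2
      · exact h
    rcases mul_eq_zero.mp hac with ha | hc
    · refine ⟨ha, ?_⟩
      rw [ha] at e2
      have : (3:K) * (c*c) = 0 := by linear_combination e2
      rcases mul_eq_zero.mp this with h | h
      · exact absurd h h3
      · exact mul_self_eq_zero.mp h
    · have ha : a = 0 := by
        rw [hc] at e3
        have : (2:K) * (a*a) = 0 := by linear_combination e3
        rcases mul_eq_zero.mp this with h | h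
        · exact absurd h h2
        · exact mul_self_eq_zero.mp h
      exact ⟨ha, hc⟩
  · -- part 2
    have hne : (Ideal.Quotient.mk (I16 K) (X 2 * X 3) : MvPolynomial (Fin 4) K ⧸ I16 K) ≠ 0 := by
      intro h0
      rw [Ideal.Quotient.eq_zero_iff_mem] at h0
      have h0' : C (1:K) * (X 2 * X 3) ∈ I16 K := by rwa [C_1, one_mul]
      have := vanish_of (L3 K) (L3_gen) h0'
      simp only [L3, LinearMap.sub_apply, LinearMap.add_apply, LinearMap.smul_apply, mu_CXX,
        Matrix.cons_val_zero, Matrix.cons_val_one, Matrix.head_cons, Matrix.cons_val_two,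
        Matrix.tail_cons, Matrix.cons_val_three, smul_eq_mul] at this
      norm_num at this
    have hS : (piece (I16 K) 1).map
        (LinearMap.mulLeft K (Ideal.Quotient.mk (I16 K) (X 3 - X 1)))
        = Submodule.span K {(Ideal.Quotient.mk (I16 K) (X 2 * X 3) :
            MvPolynomial (Fin 4) K ⧸ I16 K)} := by
      apply le_antisymm
      · rintro x ⟨y, hy, rfl⟩
        obtain ⟨r, hr, rfl⟩ := hy
        rw [LinearMap.mulLeft_apply]
        have hr' : IsHomogeneous r 1 := mem_homogeneousSubmodule 1 r |>.mp hr
        simp only [Ideal.Quotient.mkₐ_eq_mk, AlgHom.toLinearMap_apply]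
        rw [← map_mul, as_sum r, Finset.mul_sum, map_sum]
        apply Submodule.sum_mem
        intro m hm
        have hmm : m.degree = 1 := by
          by_contra hne'
          exact (Finsupp.mem_support_iff.mp hm) (hr'.coeff_eq_zero hne')
        have hmon : ∀ i : Fin 4, monomial (Finsupp.single i 1) (coeff m r)
            = C (coeff m r) * X i := by
          intro i
          rw [X, C_mul_monomial, mul_one]
        rcases degree_one_cases m hmm with rfl | rfl | rfl | rfl
        · -- X 0
          rw [hmon 0]
          have : (X 3 - X 1) * (C (coeff (Finsupp.single 0 1) r) * X 0)
              = (- C (coeff (Finsupp.single 0 1) r)) * A6 K := by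
            simp only [A6]; ring
          have hz : Ideal.Quotient.mk (I16 K)
              ((X 3 - X 1) * (C (coeff (Finsupp.single 0 1) r) * X 0)) = 0 :=
            Ideal.Quotient.eq_zero_iff_mem.mpr
              (by rw [this]; exact Ideal.mul_mem_left _ _ mA6)
          rw [hz]
          exact Submodule.zero_mem _
        · -- X 1
          rw [hmon 1]
          have : (X 3 - X 1) * (C (coeff (Finsupp.single 1 1) r) * X 1)
              = C (coeff (Finsupp.single 1 1) r) * A2 K
                + (- C (coeff (Finsupp.single 1 1) r)) * A3 K := by
            simp only [A2, A3]; ring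
          have hz : Ideal.Quotient.mk (I16 K)
              ((X 3 - X 1) * (C (coeff (Finsupp.single 1 1) r) * X 1)) = 0 :=
            Ideal.Quotient.eq_zero_iff_mem.mpr (by
              rw [this]
              exact Ideal.add_mem _ (Ideal.mul_mem_left _ _ mA2) (Ideal.mul_mem_left _ _ mA3))
          rw [hz]
          exact Submodule.zero_mem _
        · -- X 2
          rw [hmon 2]
          apply Submodule.mem_span_singleton.mpr
          refine ⟨- coeff (Finsupp.single 2 1) r, ?_⟩
          rw [← Ideal.Quotient.mkₐ_eq_mk K (I16 K), ← map_smul, MvPolynomial.smul_eq_C_mul,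
            Ideal.Quotient.mkₐ_eq_mk, Ideal.Quotient.eq]
          have heq : C (- coeff (Finsupp.single 2 1) r) * (X 2 * X 3)
              - (X 3 - X 1) * (C (coeff (Finsupp.single 2 1) r) * X 2)
              = C (coeff (Finsupp.single 2 1) r) * A7 K := by
            simp only [A7, map_neg, map_ofNat]; ring
          rw [heq]
          exact Ideal.mul_mem_left _ _ mA7
        · -- X 3
          rw [hmon 3]
          have : (X 3 - X 1) * (C (coeff (Finsupp.single 3 1) r) * X 3)
              = C (coeff (Finsupp.single 3 1) r) * A1 K
                + (- C (coeff (Finsupp.single 3 1) r)) * A2 K := by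
            simp only [A1, A2]; ring
          have hz : Ideal.Quotient.mk (I16 K)
              ((X 3 - X 1) * (C (coeff (Finsupp.single 3 1) r) * X 3)) = 0 :=
            Ideal.Quotient.eq_zero_iff_mem.mpr (by
              rw [this]
              exact Ideal.add_mem _ (Ideal.mul_mem_left _ _ mA1) (Ideal.mul_mem_left _ _ mA2))
          rw [hz]
          exact Submodule.zero_mem _
      · rw [Submodule.span_le, Set.singleton_subset_iff]
        refine ⟨Ideal.Quotient.mk (I16 K) (- X 2), ⟨- X 2, ?_, rfl⟩, ?_⟩
        · exact Submodule.neg_mem _ (isHomogeneous_X K 2)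
        · rw [LinearMap.mulLeft_apply, ← map_mul, Ideal.Quotient.eq]
          have : (X 3 - X 1) * (- X 2) - X 2 * X 3 = A7 K := by
            simp only [A7, map_ofNat]; ring
          rw [this]
          exact mA7
    rw [hS]
    exact finrank_span_singleton hne
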